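/- One-step norm growth bound: Let L be an ℝ-linear map on real m₁×m₂ matrices with ⟨L(Z), Z⟩ ≤ α‖Z‖² for all Z, and let c > 0. Then there exist Δt₀ > 0 and C > 0, depending only on α and c, such that for all 0 < Δt ≤ Δt₀ and all matrices X, X̃, r with X̃ − X = Δt·L((X + X̃)/2) + r and ‖r‖ ≤ c·Δt²·(‖X‖ + ‖X̃‖), one has ‖X̃‖ ≤ (1 + C·Δt)·‖X‖. -/
import Mathlib

/-- Frobenius inner product on real `m₁ × m₂` matrices. -/
def finner {m₁ m₂ : ℕ} (A B : Matrix (Fin m₁) (Fin m₂) ℝ) : ℝ :=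
  ∑ i, ∑ j, A i j * B i j

/-- Frobenius norm on real `m₁ × m₂` matrices. -/
noncomputable def fnorm {m₁ m₂ : ℕ} (A : Matrix (Fin m₁) (Fin m₂) ℝ) : ℝ :=
  Real.sqrt (∑ i, ∑ j, (A i j) ^ 2)

lemma fnorm_nonneg {m₁ m₂ : ℕ} (A : Matrix (Fin m₁) (Fin m₂) ℝ) : 0 ≤ fnorm A :=
  Real.sqrt_nonneg _

lemma fnorm_sq {m₁ m₂ : ℕ} (A : Matrix (Fin m₁) (Fin m₂) ℝ) :
    fnorm A ^ 2 = finner A A := by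
  unfold fnorm finner
  rw [Real.sq_sqrt (by positivity)]
  simp [sq]

lemma finner_prod {m₁ m₂ : ℕ} (A B : Matrix (Fin m₁) (Fin m₂) ℝ) :
    finner A B = ∑ p : Fin m₁ × Fin m₂, A p.1 p.2 * B p.1 p.2 := by
  rw [finner]; exact (Fintype.sum_prod_type (f := fun p => A p.1 p.2 * B p.1 p.2)).symm

lemma finner_le {m₁ m₂ : ℕ} (A B : Matrix (Fin m₁) (Fin m₂) ℝ) :
    finner A B ≤ fnorm A * fnorm B := by
  rw [finner_prod]
  have h := Real.sum_mul_le_sqrt_mul_sqrt Finset.univ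
    (fun p : Fin m₁ × Fin m₂ => A p.1 p.2) (fun p => B p.1 p.2)
  refine h.trans_eq ?_
  unfold fnorm
  rw [show (∑ p : Fin m₁ × Fin m₂, A p.1 p.2 ^ 2) = ∑ i, ∑ j, A i j ^ 2 from
    Fintype.sum_prod_type _,
    show (∑ p : Fin m₁ × Fin m₂, B p.1 p.2 ^ 2) = ∑ i, ∑ j, B i j ^ 2 from
    Fintype.sum_prod_type _]

lemma finner_add_left {m₁ m₂ : ℕ} (A B C : Matrix (Fin m₁) (Fin m₂) ℝ) :
    finner (A + B) C = finner A C + finner B C := by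
  simp [finner, Matrix.add_apply, add_mul, Finset.sum_add_distrib]

lemma finner_smul_left {m₁ m₂ : ℕ} (t : ℝ) (A B : Matrix (Fin m₁) (Fin m₂) ℝ) :
    finner (t • A) B = t * finner A B := by
  simp [finner, Matrix.smul_apply, smul_eq_mul, Finset.mul_sum, mul_assoc]

lemma finner_smul_right {m₁ m₂ : ℕ} (t : ℝ) (A B : Matrix (Fin m₁) (Fin m₂) ℝ) :
    finner A (t • B) = t * finner A B := by
  simp [finner, Matrix.smul_apply, smul_eq_mul, Finset.mul_sum]
  congr 1; ext i; congr 1; ext j; ring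

lemma finner_key {m₁ m₂ : ℕ} (X Xt : Matrix (Fin m₁) (Fin m₂) ℝ) :
    finner (Xt - X) (X + Xt) = fnorm Xt ^ 2 - fnorm X ^ 2 := by
  rw [fnorm_sq, fnorm_sq]
  simp only [finner, Matrix.sub_apply, Matrix.add_apply]
  rw [← Finset.sum_sub_distrib]
  congr 1; ext i
  rw [← Finset.sum_sub_distrib]
  congr 1; ext j
  ring

lemma fnorm_triangle {m₁ m₂ : ℕ} (A B : Matrix (Fin m₁) (Fin m₂) ℝ) :
    fnorm (A + B) ≤ fnorm A + fnorm B := by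
  have h1 : fnorm (A + B) ^ 2 ≤ (fnorm A + fnorm B) ^ 2 := by
    rw [fnorm_sq, finner_add_left]
    have e2 : finner A (A + B) = finner A A + finner A B := by
      simp [finner, Matrix.add_apply, mul_add, Finset.sum_add_distrib]
    have e3 : finner B (A + B) = finner B A + finner B B := by
      simp [finner, Matrix.add_apply, mul_add, Finset.sum_add_distrib]
    have e4 : finner B A = finner A B := by
      simp [finner, mul_comm]
    have hAB := finner_le A B
    rw [e2, e3, e4, ← fnorm_sq, ← fnorm_sq]
    ring_nf
    nlinarith [fnorm_nonneg A, fnorm_nonneg B]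
  nlinarith [fnorm_nonneg (A + B), fnorm_nonneg A, fnorm_nonneg B]

lemma growth_arith (ε a b : ℝ) (ha : 0 ≤ a) (hb : 0 ≤ b) (hε0 : 0 < ε)
    (hε : ε ≤ 1 / 2) (hfin : b ^ 2 - a ^ 2 ≤ ε * (a + b) ^ 2) :
    b ≤ (1 + 4 * ε) * a := by
  rcases eq_or_lt_of_le (by positivity : (0:ℝ) ≤ a + b) with h0 | hpos
  · have hb0 : b = 0 := by linarith
    rw [hb0]; positivity
  · have hdiff : b - a ≤ ε * (a + b) := by
      have h : (b - a) * (a + b) ≤ (ε * (a + b)) * (a + b) := by nlinarith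
      exact le_of_mul_le_mul_right h hpos
    nlinarith [mul_nonneg ha hε0.le, mul_nonneg (mul_nonneg ha hε0.le) hε0.le,
      mul_nonneg hb hε0.le]

/-- One-step norm growth bound for the perturbed implicit-midpoint step. -/
theorem one_step_norm_growth_bound (α c : ℝ) (hc : 0 < c) :
    ∃ Δt₀ > (0 : ℝ), ∃ C > (0 : ℝ),
      ∀ (m₁ m₂ : ℕ)
        (L : Matrix (Fin m₁) (Fin m₂) ℝ →ₗ[ℝ] Matrix (Fin m₁) (Fin m₂) ℝ),
        (∀ Z : Matrix (Fin m₁) (Fin m₂) ℝ, finner (L Z) Z ≤ α * (fnorm Z) ^ 2) →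
        ∀ Δt : ℝ, 0 < Δt → Δt ≤ Δt₀ →
        ∀ X Xt r : Matrix (Fin m₁) (Fin m₂) ℝ,
          Xt - X = Δt • L ((2 : ℝ)⁻¹ • (X + Xt)) + r →
          fnorm r ≤ c * Δt ^ 2 * (fnorm X + fnorm Xt) →
          fnorm Xt ≤ (1 + C * Δt) * fnorm X := by
  obtain ⟨M, hM⟩ : ∃ M : ℝ, M = |α| / 2 + c + 1 := ⟨_, rfl⟩
  have hM0 : 0 < M := by rw [hM]; positivity
  refine ⟨1 / (2 * M), by positivity, 4 * M, by positivity, ?_⟩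
  intro m₁ m₂ L hL Δt hΔt hΔt0 X Xt r hstep hr
  set a := fnorm X with hadef
  set b := fnorm Xt with hbdef
  set s := fnorm (X + Xt) with hsdef
  have ha : 0 ≤ a := fnorm_nonneg X
  have hb : 0 ≤ b := fnorm_nonneg Xt
  have hs0 : 0 ≤ s := fnorm_nonneg _
  have hs : s ≤ a + b := fnorm_triangle X Xt
  have hkey : b ^ 2 - a ^ 2
      = Δt * finner (L ((2:ℝ)⁻¹ • (X + Xt))) (X + Xt) + finner r (X + Xt) := by
    rw [hbdef, hadef, ← finner_key X Xt, hstep, finner_add_left, finner_smul_left]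
  have hZ : finner (L ((2:ℝ)⁻¹ • (X + Xt))) (X + Xt) ≤ (α / 2) * s ^ 2 := by
    set W := (2:ℝ)⁻¹ • (X + Xt) with hW
    have h2 : (X + Xt) = (2:ℝ) • W := by
      rw [hW, smul_smul]; norm_num
    calc finner (L W) (X + Xt)
        = 2 * finner (L W) W := by rw [h2, finner_smul_right]
      _ ≤ 2 * (α * fnorm W ^ 2) := by
          have := hL W; linarith
      _ = (α / 2) * s ^ 2 := by
          rw [fnorm_sq, hW, finner_smul_left, finner_smul_right, ← fnorm_sq, ← hsdef]; ring
  have hrs : finner r (X + Xt) ≤ c * Δt ^ 2 * (a + b) ^ 2 := by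
    calc finner r (X + Xt) ≤ fnorm r * s := finner_le r (X + Xt)
      _ ≤ (c * Δt ^ 2 * (a + b)) * (a + b) := by
          apply mul_le_mul hr hs hs0
          positivity
      _ = c * Δt ^ 2 * (a + b) ^ 2 := by ring
  have hkey2 : b ^ 2 - a ^ 2 ≤ Δt * ((α / 2) * s ^ 2) + c * Δt ^ 2 * (a + b) ^ 2 := by
    rw [hkey]
    have := mul_le_mul_of_nonneg_left hZ hΔt.le
    linarith
  clear hkey hZ hrs hL hstep hr
  clear_value a b s
  clear hadef hbdef hsdef
  clear L X Xt r
  have hΔthalf : Δt ≤ 1 / 2 := by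
    have h2M : (2:ℝ) ≤ 2 * M := by nlinarith [abs_nonneg α]
    have := one_div_le_one_div_of_le two_pos h2M
    linarith
  have hs2 : s ^ 2 ≤ (a + b) ^ 2 := by nlinarith
  have hfin : b ^ 2 - a ^ 2 ≤ M * Δt * (a + b) ^ 2 := by
    have hα : (0:ℝ) ≤ (|α| - α) * s ^ 2 :=
      mul_nonneg (by linarith [le_abs_self α]) (sq_nonneg s)
    have h1 : (α / 2) * s ^ 2 ≤ (|α| / 2) * (a + b) ^ 2 := by
      nlinarith [abs_nonneg α]
    have h2 : c * Δt ^ 2 * (a + b) ^ 2 ≤ Δt * (c * (a + b) ^ 2) := by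
      have hct : c * Δt ≤ c * 1 := mul_le_mul_of_nonneg_left (by linarith) hc.le
      calc c * Δt ^ 2 * (a + b) ^ 2 = (c * Δt) * (Δt * (a + b) ^ 2) := by ring
        _ ≤ (c * 1) * (Δt * (a + b) ^ 2) :=
            mul_le_mul_of_nonneg_right hct (by positivity)
        _ = Δt * (c * (a + b) ^ 2) := by ring
    have h3 : Δt * ((|α| / 2) * (a + b) ^ 2) + Δt * (c * (a + b) ^ 2)
        ≤ M * Δt * (a + b) ^ 2 := by
      rw [hM]; nlinarith [sq_nonneg (a + b)]
    have h4 := mul_le_mul_of_nonneg_left h1 hΔt.le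
    linarith
  have hε0 : 0 < M * Δt := mul_pos hM0 hΔt
  have hεhalf : M * Δt ≤ 1 / 2 := by
    rw [le_div_iff₀ (by positivity)] at hΔt0
    nlinarith [hΔt0]
  have := growth_arith (M * Δt) a b ha hb hε0 hεhalf hfin
  linarith [mul_nonneg ha hε0.le]
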